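/- For all n ≥ 0 and real x, ∑_{k=0}^{n} C(n,k) (λ)_{n-k,λ} φ_{k+1,λ}(x) = x(φ'_{n,λ}(x) + φ_{n,λ}(x)), where φ'_{n,λ} denotes the derivative of φ_{n,λ} with respect to x. -/

import Mathlib

open Finset

/-- Generalized falling factorial `(x)_{n,lam} = x(x-lam)...(x-(n-1)lam)`. -/
noncomputable def dfall (lam x : ℝ) (n : ℕ) : ℝ := ∏ i ∈ Finset.range n, (x - i * lam)

/-- Generalized rising factorial `⟨x⟩_{n,lam} = x(x+lam)...(x+(n-1)lam)`. -/
noncomputable def drise (lam x : ℝ) (n : ℕ) : ℝ := ∏ i ∈ Finset.range n, (x + i * lam)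

lemma dfall_succ (lam x : ℝ) (n : ℕ) :
    dfall lam x (n + 1) = dfall lam x n * (x - n * lam) := by
  simp [dfall, Finset.prod_range_succ]

lemma dfall_one_nat_zero {m j : ℕ} (h : m < j) : dfall 1 (m : ℝ) j = 0 := by
  apply Finset.prod_eq_zero (Finset.mem_range.mpr h)
  simp

lemma dfall_one_nat_ne (k : ℕ) : dfall 1 (k : ℝ) k ≠ 0 := by
  apply ne_of_gt
  apply Finset.prod_pos
  intro i hi
  have hi' : i < k := Finset.mem_range.mp hi
  have : (i : ℝ) < k := by exact_mod_cast hi'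
  simp only [mul_one]
  linarith

lemma dfall_indep (N : ℕ) (c : ℕ → ℝ)
    (h : ∀ x : ℝ, ∑ k ∈ range N, c k * dfall 1 x k = 0) :
    ∀ k, k < N → c k = 0 := by
  intro k
  induction k using Nat.strong_induction_on with
  | _ k ih =>
    intro hk
    have hx := h (k : ℝ)
    have hsum : ∑ j ∈ range N, c j * dfall 1 (k : ℝ) j = c k * dfall 1 (k : ℝ) k := by
      apply Finset.sum_eq_single
      · intro j hj hne
        rcases lt_or_gt_of_ne hne with hlt | hgt
        · rw [ih j hlt (Finset.mem_range.mp hj)]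
          ring
        · rw [dfall_one_nat_zero hgt]
          ring
      · intro hcon
        exact absurd (Finset.mem_range.mpr hk) hcon
    rw [hsum] at hx
    exact (mul_eq_zero.mp hx).resolve_right (dfall_one_nat_ne k)

lemma S_rec (lam : ℝ) (S : ℕ → ℕ → ℝ)
    (hS : ∀ (n : ℕ) (x : ℝ), dfall lam x n = ∑ k ∈ Finset.range (n + 1), S n k * dfall 1 x k)
    (n k : ℕ) (hk : k < n + 2) :
    S (n + 1) k =
      (if k = 0 then 0 else S n (k - 1)) +
        ((k : ℝ) - n * lam) * (if k ≤ n then S n k else 0) := by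
  set T : ℕ → ℝ := fun j =>
    (if j = 0 then 0 else S n (j - 1)) + ((j : ℝ) - n * lam) * (if j ≤ n then S n j else 0)
    with hT
  have key : ∀ x : ℝ, ∑ j ∈ range (n + 2), (S (n + 1) j - T j) * dfall 1 x j = 0 := by
    intro x
    have h1 := hS (n + 1) x
    have h2 := hS n x
    have e1 : dfall lam x (n + 1) =
        ∑ j ∈ range (n + 1), S n j * (dfall 1 x (j + 1) + ((j : ℝ) - n * lam) * dfall 1 x j) := by
      rw [dfall_succ, h2, Finset.sum_mul]
      apply Finset.sum_congr rfl
      intro j hj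
      rw [dfall_succ]
      ring
    have e2 : ∑ j ∈ range (n + 2), (if j = 0 then (0:ℝ) else S n (j - 1)) * dfall 1 x j =
        ∑ j ∈ range (n + 1), S n j * dfall 1 x (j + 1) := by
      rw [Finset.sum_range_succ' (fun j => (if j = 0 then (0:ℝ) else S n (j - 1)) * dfall 1 x j)]
      simp
    have e3 : ∑ j ∈ range (n + 2),
          (((j : ℝ) - n * lam) * (if j ≤ n then S n j else 0)) * dfall 1 x j =
        ∑ j ∈ range (n + 1), S n j * (((j : ℝ) - n * lam) * dfall 1 x j) := by
      rw [Finset.sum_range_succ, if_neg (by omega : ¬ (n + 1 ≤ n)), mul_zero, zero_mul, add_zero]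
      apply Finset.sum_congr rfl
      intro j hj
      rw [if_pos (Nat.lt_succ_iff.mp (Finset.mem_range.mp hj))]
      ring
    have hTsum : ∑ j ∈ range (n + 2), T j * dfall 1 x j =
        ∑ j ∈ range (n + 2), S (n + 1) j * dfall 1 x j := by
      calc ∑ j ∈ range (n + 2), T j * dfall 1 x j
          = ∑ j ∈ range (n + 2), ((if j = 0 then (0:ℝ) else S n (j - 1)) * dfall 1 x j
              + (((j : ℝ) - n * lam) * (if j ≤ n then S n j else 0)) * dfall 1 x j) := by
            apply Finset.sum_congr rfl
            intro j _
            rw [hT]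
            ring
        _ = (∑ j ∈ range (n + 2), (if j = 0 then (0:ℝ) else S n (j - 1)) * dfall 1 x j)
              + ∑ j ∈ range (n + 2),
                  (((j : ℝ) - n * lam) * (if j ≤ n then S n j else 0)) * dfall 1 x j :=
            Finset.sum_add_distrib
        _ = (∑ j ∈ range (n + 1), S n j * dfall 1 x (j + 1))
              + ∑ j ∈ range (n + 1), S n j * (((j : ℝ) - n * lam) * dfall 1 x j) := by
            rw [e2, e3]
        _ = ∑ j ∈ range (n + 1),
              S n j * (dfall 1 x (j + 1) + ((j : ℝ) - n * lam) * dfall 1 x j) := by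
            rw [← Finset.sum_add_distrib]
            apply Finset.sum_congr rfl
            intro j _
            ring
        _ = dfall lam x (n + 1) := e1.symm
        _ = ∑ j ∈ range (n + 2), S (n + 1) j * dfall 1 x j := h1
    calc ∑ j ∈ range (n + 2), (S (n + 1) j - T j) * dfall 1 x j
        = (∑ j ∈ range (n + 2), S (n + 1) j * dfall 1 x j)
            - ∑ j ∈ range (n + 2), T j * dfall 1 x j := by
          rw [← Finset.sum_sub_distrib]
          apply Finset.sum_congr rfl
          intro j _
          ring
      _ = 0 := by rw [hTsum, sub_self]
  have hz := dfall_indep (n + 2) (fun j => S (n + 1) j - T j) key k hk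
  have : S (n + 1) k = T k := by
    have := hz
    linarith
  rw [this, hT]

lemma pow_pred_mul (x : ℝ) (k : ℕ) : (k : ℝ) * x ^ (k - 1) * x = (k : ℝ) * x ^ k := by
  cases k with
  | zero => simp
  | succ m =>
    rw [Nat.succ_sub_one, pow_succ]
    ring

theorem stmt12 (lam : ℝ) (S : ℕ → ℕ → ℝ)
    (hS : ∀ (n : ℕ) (x : ℝ), dfall lam x n = ∑ k ∈ Finset.range (n + 1), S n k * dfall 1 x k)
    (phi : ℕ → ℝ → ℝ)
    (hphi : ∀ (n : ℕ) (x : ℝ), phi n x = ∑ k ∈ Finset.range (n + 1), S n k * x ^ k) (n : ℕ) (x : ℝ) :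
    ∑ k ∈ Finset.range (n + 1),
        (n.choose k : ℝ) * dfall lam lam (n - k) * phi (k + 1) x =
      x * (deriv (phi n) x + phi n x) := by
  have hderiv : deriv (phi n) x = ∑ k ∈ range (n + 1), S n k * ((k : ℝ) * x ^ (k - 1)) := by
    have hfun : phi n = fun y => ∑ k ∈ range (n + 1), S n k * y ^ k := funext (hphi n)
    rw [hfun, deriv_fun_sum (fun i _ => ((differentiable_pow i).const_mul _).differentiableAt)]
    apply Finset.sum_congr rfl
    intro k _
    rw [deriv_const_mul _ (differentiable_pow k).differentiableAt, deriv_pow_field]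
  have hL : ∑ k ∈ range (n + 1), (n.choose k : ℝ) * dfall lam lam (n - k) * phi (k + 1) x
      = phi (n + 1) x + n * lam * phi n x := by
    cases n with
    | zero => simp [dfall]
    | succ m =>
      rw [Finset.sum_range_succ, Finset.sum_range_succ]
      have hz : ∑ k ∈ range m, ((m + 1).choose k : ℝ) * dfall lam lam (m + 1 - k) * phi (k + 1) x
          = 0 := by
        apply Finset.sum_eq_zero
        intro k hk
        have hk' : k < m := Finset.mem_range.mp hk
        have hd : dfall lam lam (m + 1 - k) = 0 := by
          apply Finset.prod_eq_zero (i := 1) (Finset.mem_range.mpr (by omega))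
          simp
        rw [hd]
        ring
      rw [hz]
      have h1 : m + 1 - m = 1 := by omega
      have h2 : m + 1 - (m + 1) = 0 := by omega
      rw [h1, h2]
      have hd1 : dfall lam lam 1 = lam := by simp [dfall]
      have hd0 : dfall lam lam 0 = 1 := by simp [dfall]
      rw [hd1, hd0, Nat.choose_succ_self_right, Nat.choose_self]
      push_cast
      ring
  rw [hL, hderiv, hphi n x, hphi (n + 1) x]
  have hrec : ∑ k ∈ range (n + 2), S (n + 1) k * x ^ k
      = ∑ k ∈ range (n + 1), (S n k * x ^ (k + 1) + ((k : ℝ) - n * lam) * S n k * x ^ k) := by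
    rw [Finset.sum_congr rfl (fun k hk => by
      rw [S_rec lam S hS n k (Finset.mem_range.mp hk), add_mul])]
    rw [Finset.sum_add_distrib]
    have eA : ∑ k ∈ range (n + 2), (if k = 0 then (0:ℝ) else S n (k - 1)) * x ^ k
        = ∑ k ∈ range (n + 1), S n k * x ^ (k + 1) := by
      rw [Finset.sum_range_succ' (fun k => (if k = 0 then (0:ℝ) else S n (k - 1)) * x ^ k)]
      simp
    have eB : ∑ k ∈ range (n + 2), (((k : ℝ) - n * lam) * (if k ≤ n then S n k else 0)) * x ^ k
        = ∑ k ∈ range (n + 1), ((k : ℝ) - n * lam) * S n k * x ^ k := by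
      rw [Finset.sum_range_succ, if_neg (by omega : ¬ (n + 1 ≤ n)), mul_zero, zero_mul, add_zero]
      apply Finset.sum_congr rfl
      intro k hk
      rw [if_pos (Nat.lt_succ_iff.mp (Finset.mem_range.mp hk))]
    rw [eA, eB, ← Finset.sum_add_distrib]
  rw [hrec, Finset.mul_sum, ← Finset.sum_add_distrib, mul_add, Finset.mul_sum, Finset.mul_sum,
    ← Finset.sum_add_distrib]
  apply Finset.sum_congr rfl
  intro k _
  linear_combination (-(S n k)) * pow_pred_mul x k
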